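/- Let C ⊆ L^Φ be a monotone, positively homogeneous, additive, order closed set such that for each X ∈ L^Φ there exists k ∈ ℝ with X − k·1 ∉ C. Then ρ(X) = inf{m ∈ ℝ : X + m·1 ∈ C} defines a coherent risk measure on L^Φ whose sublevel sets satisfy {ρ ≤ m} = C − m·1; in particular each {ρ ≤ m} is order closed and ρ has the Fatou property. -/

import Mathlib

open MeasureTheory Filter Set

noncomputable section

/-- An Orlicz function: convex, increasing, vanishing at 0. -/
structure OrliczFunction where
  toFun : ℝ → ℝ
  convexOn : ConvexOn ℝ (Set.Ici (0:ℝ)) toFun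
  monoOn : MonotoneOn toFun (Set.Ici (0:ℝ))
  map_zero : toFun 0 = 0

namespace Orlicz

variable {Ω : Type*} [MeasurableSpace Ω]

/-- Membership in the Orlicz space `L^Φ`. -/
def MemLp (Φ : OrliczFunction) (μ : Measure Ω) (X : Ω → ℝ) : Prop :=
  AEStronglyMeasurable X μ ∧
    ∃ c : ℝ, 0 < c ∧ Integrable (fun ω => Φ.toFun (|X ω| / c)) μ

/-- Membership in the Orlicz heart `H^Φ`. -/
def MemHeart (Φ : OrliczFunction) (μ : Measure Ω) (X : Ω → ℝ) : Prop :=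
  AEStronglyMeasurable X μ ∧
    ∀ c : ℝ, 0 < c → Integrable (fun ω => Φ.toFun (|X ω| / c)) μ

/-- The Luxemburg norm. -/
def luxNorm (Φ : OrliczFunction) (μ : Measure Ω) (X : Ω → ℝ) : ℝ :=
  sInf {c : ℝ | 0 < c ∧ Integrable (fun ω => Φ.toFun (|X ω| / c)) μ ∧
    ∫ ω, Φ.toFun (|X ω| / c) ∂μ ≤ 1}

/-- The dual pairing `E[XY]`. -/
def pairing (μ : Measure Ω) (X Y : Ω → ℝ) : ℝ := ∫ ω, X ω * Y ω ∂μ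

/-- Order convergence in `L^Φ`: a.s. convergence together with order boundedness. -/
def OrderConvTo (Φ : OrliczFunction) (μ : Measure Ω) (X : ℕ → Ω → ℝ) (L : Ω → ℝ) : Prop :=
  (∀ᵐ ω ∂μ, Tendsto (fun n => X n ω) atTop (nhds (L ω))) ∧
    ∃ Z : Ω → ℝ, MemLp Φ μ Z ∧ ∀ n, ∀ᵐ ω ∂μ, |X n ω| ≤ Z ω

/-- A set is order closed if it contains the order limits of its order convergent sequences. -/
def OrderClosed (Φ : OrliczFunction) (μ : Measure Ω) (C : Set (Ω → ℝ)) : Prop :=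
  ∀ (X : ℕ → Ω → ℝ) (L : Ω → ℝ), (∀ n, X n ∈ C) → MemLp Φ μ L →
    OrderConvTo Φ μ X L → L ∈ C

/-- The order closure of a set in `L^Φ`. -/
def orderClosure (Φ : OrliczFunction) (μ : Measure Ω) (C : Set (Ω → ℝ)) : Set (Ω → ℝ) :=
  {L | MemLp Φ μ L ∧ ∃ X : ℕ → Ω → ℝ, (∀ n, X n ∈ C) ∧ OrderConvTo Φ μ X L}

/-- Closure in the weak topology induced by pairing against functions satisfying `dual`,
within the space of functions satisfying `mem`. -/
def wClosure (mem dual : (Ω → ℝ) → Prop) (μ : Measure Ω) (C : Set (Ω → ℝ)) :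
    Set (Ω → ℝ) :=
  {X | mem X ∧ ∀ ε : ℝ, 0 < ε → ∀ F : Finset (Ω → ℝ), (∀ Y ∈ F, dual Y) →
    ∃ Z ∈ C, ∀ Y ∈ F, |pairing μ Z Y - pairing μ X Y| < ε}

/-- Weak closedness. -/
def WClosed (mem dual : (Ω → ℝ) → Prop) (μ : Measure Ω) (C : Set (Ω → ℝ)) : Prop :=
  wClosure mem dual μ C ⊆ C

/-- Weak sequential closedness. -/
def WSeqClosed (mem dual : (Ω → ℝ) → Prop) (μ : Measure Ω) (C : Set (Ω → ℝ)) : Prop :=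
  ∀ (X : ℕ → Ω → ℝ) (L : Ω → ℝ), (∀ n, X n ∈ C) → mem L →
    (∀ Y, dual Y → Tendsto (fun n => pairing μ (X n) Y) atTop (nhds (pairing μ L Y))) →
    L ∈ C

/-- The Δ₂-condition: `Φ(2t) < k·Φ(t)` for all large `t`. -/
def Delta2 (Φ : OrliczFunction) : Prop :=
  ∃ t₀ : ℝ, 0 < t₀ ∧ ∃ k : ℝ, ∀ t : ℝ, t₀ ≤ t → Φ.toFun (2 * t) < k * Φ.toFun t

/-- `(Φ,Ψ)` is a conjugate pair of Orlicz functions, with `Φ` superlinear and positive. -/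
def IsConjugate (Φ Ψ : OrliczFunction) : Prop :=
  (∀ s : ℝ, 0 ≤ s →
      Ψ.toFun s = sSup ((fun t => t * s - Φ.toFun t) '' Set.Ici (0:ℝ))) ∧
    Tendsto (fun t => Φ.toFun t / t) atTop atTop ∧ (∀ t : ℝ, 0 < t → 0 < Φ.toFun t)

/-- Fenchel conjugate of a functional on `L^Φ`. -/
def rhoStar (Φ : OrliczFunction) (μ : Measure Ω) (ρ : (Ω → ℝ) → EReal) (Y : Ω → ℝ) :
    EReal :=
  sSup {v : EReal | ∃ X : Ω → ℝ, MemLp Φ μ X ∧ v = ((pairing μ X Y : ℝ) : EReal) - ρ X}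

/-- A coherent risk measure on `L^Φ`: proper, subadditive, monotone, cash additive and
positively homogeneous. -/
def Coherent (Φ : OrliczFunction) (μ : Measure Ω) (ρ : (Ω → ℝ) → EReal) : Prop :=
  (∀ X, ρ X ≠ ⊥) ∧
    (∃ X, MemLp Φ μ X ∧ ρ X ≠ ⊤) ∧
    (∀ X Y, MemLp Φ μ X → MemLp Φ μ Y → ρ (X + Y) ≤ ρ X + ρ Y) ∧
    (∀ X Y, MemLp Φ μ X → MemLp Φ μ Y → (∀ᵐ ω ∂μ, Y ω ≤ X ω) → ρ X ≤ ρ Y) ∧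
    (∀ (X : Ω → ℝ) (m : ℝ), MemLp Φ μ X →
      ρ (fun ω => X ω + m) = ρ X - ((m : ℝ) : EReal)) ∧
    (∀ (X : Ω → ℝ) (l : ℝ), 0 < l → MemLp Φ μ X → ρ (l • X) = ((l : ℝ) : EReal) * ρ X)

/-- The Fatou property on `L^Φ`. -/
def Fatou (Φ : OrliczFunction) (μ : Measure Ω) (ρ : (Ω → ℝ) → EReal) : Prop :=
  ∀ (X : ℕ → Ω → ℝ) (L : Ω → ℝ), (∀ n, MemLp Φ μ (X n)) → MemLp Φ μ L →
    OrderConvTo Φ μ X L → ρ L ≤ liminf (fun n => ρ (X n)) atTop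

/-- Boundedly a.s. closed subsets of the Orlicz heart. -/
def BddAEClosed (Φ : OrliczFunction) (μ : Measure Ω) (C : Set (Ω → ℝ)) : Prop :=
  ∀ (S : ℕ → Ω → ℝ) (L : Ω → ℝ), (∀ n, S n ∈ C) →
    (∃ M : ℝ, ∀ n, luxNorm Φ μ (S n) ≤ M) → MemHeart Φ μ L →
    (∀ᵐ ω ∂μ, Tendsto (fun n => S n ω) atTop (nhds (L ω))) → L ∈ C

end Orlicz

/-! The infimum `ρ_C(X) = inf {m | X + m ∈ C}` is translation invariant for any `C`, positively
homogeneous when `C` is a cone and subadditive when `C` is additive. For monotone `C`, each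
`{m | X + m ∈ C}` is an up-set, bounded below by the escape condition (so `ρ_C > -∞`), and
order closedness of `C` makes it closed: `ρ_C(X) ≤ m ↔ X + m ∈ C`. The sublevel sets are thus
translates of `C`, hence order closed, and this gives the Fatou property: if
`liminf ρ_C(Xₙ) < y < ρ_C(L)`, a subsequence lies in `{ρ_C ≤ y}`, and so does its order
limit `L`. -/

open scoped Topology

namespace OrliczFunction

variable (Φ : OrliczFunction)

lemma toFun_nonneg {t : ℝ} (ht : 0 ≤ t) : 0 ≤ Φ.toFun t := by
  simpa only [Φ.map_zero] using Φ.monoOn (Set.mem_Ici.2 le_rfl) (Set.mem_Ici.2 ht) ht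

/-- `Φ` is only monotone on `[0, ∞)`; precomposing with `max · 0` makes it monotone, hence
measurable, on `ℝ`. -/
lemma aestronglyMeasurable_comp_abs_div {Ω : Type*} [MeasurableSpace Ω] {μ : Measure Ω}
    {f : Ω → ℝ} (hf : AEStronglyMeasurable f μ) {c : ℝ} (hc : 0 ≤ c) :
    AEStronglyMeasurable (fun ω => Φ.toFun (|f ω| / c)) μ := by
  have hmono : Monotone (fun t : ℝ => Φ.toFun (max t 0)) := fun a b hab =>
    Φ.monoOn (Set.mem_Ici.2 (le_max_right _ _)) (Set.mem_Ici.2 (le_max_right _ _))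
      (max_le_max hab le_rfl)
  have hmeas : AEMeasurable (fun ω => |f ω| / c) μ :=
    (measurable_abs.comp_aemeasurable hf.aemeasurable).div_const c
  refine (hmono.measurable.comp_aemeasurable hmeas).aestronglyMeasurable.congr
    (Eventually.of_forall fun ω => ?_)
  simp only [Function.comp_apply, max_eq_left (div_nonneg (abs_nonneg (f ω)) hc)]

lemma apply_abs_add_div_le {c d : ℝ} (hc : 0 < c) (hd : 0 < d) (x y : ℝ) :
    Φ.toFun (|x + y| / (c + d)) ≤
      c / (c + d) * Φ.toFun (|x| / c) + d / (c + d) * Φ.toFun (|y| / d) := by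
  calc Φ.toFun (|x + y| / (c + d)) ≤ Φ.toFun ((|x| + |y|) / (c + d)) :=
        Φ.monoOn (Set.mem_Ici.2 (by positivity)) (Set.mem_Ici.2 (by positivity))
          (by gcongr; exact abs_add_le x y)
    _ = Φ.toFun ((c / (c + d)) • (|x| / c) + (d / (c + d)) • (|y| / d)) := by
        congr 1; simp only [smul_eq_mul]; field_simp
    _ ≤ _ := Φ.convexOn.2 (Set.mem_Ici.2 (by positivity)) (Set.mem_Ici.2 (by positivity))
        (by positivity) (by positivity) (by field_simp)

end OrliczFunction

namespace Orlicz

section OrliczSpace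

variable {Ω : Type*} [MeasurableSpace Ω] {Φ : OrliczFunction} {μ : Measure Ω}

lemma MemLp.add {X Y : Ω → ℝ} (hX : MemLp Φ μ X) (hY : MemLp Φ μ Y) :
    MemLp Φ μ (fun ω => X ω + Y ω) := by
  obtain ⟨hXm, c, hc, hXi⟩ := hX
  obtain ⟨hYm, d, hd, hYi⟩ := hY
  refine ⟨hXm.add hYm, c + d, by positivity, ?_⟩
  refine ((hXi.const_mul (c / (c + d))).add (hYi.const_mul (d / (c + d)))).mono'
    (Φ.aestronglyMeasurable_comp_abs_div (hXm.add hYm) (by positivity))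
    (Eventually.of_forall fun ω => ?_)
  rw [Real.norm_of_nonneg (Φ.toFun_nonneg (by positivity))]
  exact Φ.apply_abs_add_div_le hc hd (X ω) (Y ω)

lemma memLp_const [IsFiniteMeasure μ] (k : ℝ) : MemLp Φ μ (fun _ => k) :=
  ⟨aestronglyMeasurable_const, 1, one_pos, integrable_const _⟩

lemma MemLp.add_const [IsFiniteMeasure μ] {X : Ω → ℝ} (hX : MemLp Φ μ X) (k : ℝ) :
    MemLp Φ μ (fun ω => X ω + k) :=
  hX.add (memLp_const k)

lemma MemLp.abs {X : Ω → ℝ} (hX : MemLp Φ μ X) : MemLp Φ μ (fun ω => |X ω|) := by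
  obtain ⟨hm, c, hc, hi⟩ := hX
  exact ⟨(measurable_abs.comp_aemeasurable hm.aemeasurable).aestronglyMeasurable, c, hc,
    by simpa only [abs_abs] using hi⟩

lemma orderConvTo_const {X : Ω → ℝ} (hX : MemLp Φ μ X) : OrderConvTo Φ μ (fun _ => X) X :=
  ⟨Eventually.of_forall fun _ => tendsto_const_nhds, fun ω => |X ω|, hX.abs,
    fun _ => Eventually.of_forall fun _ => le_rfl⟩

lemma OrderConvTo.add_const_seq [IsFiniteMeasure μ] {X : ℕ → Ω → ℝ} {L : Ω → ℝ}
    (h : OrderConvTo Φ μ X L) {u : ℕ → ℝ} {m B : ℝ} (hu : Tendsto u atTop (𝓝 m))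
    (hB : ∀ n, |u n| ≤ B) :
    OrderConvTo Φ μ (fun n ω => X n ω + u n) (fun ω => L ω + m) := by
  obtain ⟨hae, Z, hZ, hdom⟩ := h
  refine ⟨hae.mono fun ω hω => hω.add hu, fun ω => Z ω + B, hZ.add_const B,
    fun n => (hdom n).mono fun ω hω => ?_⟩
  calc |X n ω + u n| ≤ |X n ω| + |u n| := abs_add_le _ _
    _ ≤ Z ω + B := add_le_add hω (hB n)

lemma OrderConvTo.comp_strictMono {X : ℕ → Ω → ℝ} {L : Ω → ℝ} (h : OrderConvTo Φ μ X L)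
    {φ : ℕ → ℕ} (hφ : StrictMono φ) : OrderConvTo Φ μ (fun k => X (φ k)) L := by
  obtain ⟨hae, Z, hZ, hdom⟩ := h
  exact ⟨hae.mono fun ω hω => hω.comp hφ.tendsto_atTop, Z, hZ, fun k => hdom (φ k)⟩

lemma OrderClosed.add_const_mem_of_forall_lt [IsFiniteMeasure μ] {C : Set (Ω → ℝ)}
    (hC : OrderClosed Φ μ C) {X : Ω → ℝ} (hX : MemLp Φ μ X) {m : ℝ}
    (h : ∀ n : ℝ, m < n → (fun ω => X ω + n) ∈ C) : (fun ω => X ω + m) ∈ C := by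
  have hu : Tendsto (fun k : ℕ => m + 1 / ((k : ℝ) + 1)) atTop (𝓝 m) := by
    simpa using tendsto_one_div_add_atTop_nhds_zero_nat.const_add m
  have hB (k : ℕ) : |m + 1 / ((k : ℝ) + 1)| ≤ |m| + 1 := by
    have hk : 1 / ((k : ℝ) + 1) ≤ 1 := div_le_one_of_le₀ (by linarith [k.cast_nonneg (α := ℝ)])
      (by positivity)
    calc |m + 1 / ((k : ℝ) + 1)| ≤ |m| + |1 / ((k : ℝ) + 1)| := abs_add_le _ _
      _ ≤ |m| + 1 := by rw [abs_of_pos (by positivity : (0 : ℝ) < 1 / ((k : ℝ) + 1))]; linarith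
  exact hC _ _ (fun k => h _ (by simp only [lt_add_iff_pos_right]; positivity))
    (hX.add_const m) ((orderConvTo_const hX).add_const_seq hu hB)

lemma OrderClosed.setOf_add_const_mem [IsFiniteMeasure μ] {C : Set (Ω → ℝ)}
    (hC : OrderClosed Φ μ C) (m : ℝ) :
    OrderClosed Φ μ {X | MemLp Φ μ X ∧ (fun ω => X ω + m) ∈ C} :=
  fun _ _ hX hL hconv => ⟨hL, hC _ _ (fun n => (hX n).2) (hL.add_const m)
    (hconv.add_const_seq tendsto_const_nhds fun _ => le_rfl)⟩

lemma fatou_of_orderClosed_sublevel {ρ : (Ω → ℝ) → EReal}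
    (h : ∀ m : ℝ, OrderClosed Φ μ {X | MemLp Φ μ X ∧ ρ X ≤ m}) : Fatou Φ μ ρ := by
  intro X L hX hL hconv
  by_contra! hlt
  obtain ⟨y, hy_liminf, hy_L⟩ := EReal.exists_between_coe_real hlt
  obtain ⟨φ, hφ, hφy⟩ := extraction_of_frequently_atTop
    (frequently_lt_of_liminf_lt (by isBoundedDefault) hy_liminf)
  exact hy_L.not_ge (h y _ _ (fun k => ⟨hX (φ k), (hφy k).le⟩) hL (hconv.comp_strictMono hφ)).2

end OrliczSpace

section AcceptanceSet

variable {Ω : Type*} {C : Set (Ω → ℝ)} {X Y : Ω → ℝ}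

def acceptanceRisk (C : Set (Ω → ℝ)) (X : Ω → ℝ) : EReal :=
  sInf {v : EReal | ∃ m : ℝ, v = m ∧ (fun ω => X ω + m) ∈ C}

lemma acceptanceRisk_le {m : ℝ} (h : (fun ω => X ω + m) ∈ C) : acceptanceRisk C X ≤ m :=
  sInf_le ⟨m, rfl, h⟩

lemma le_acceptanceRisk_iff {c : EReal} :
    c ≤ acceptanceRisk C X ↔ ∀ m : ℝ, (fun ω => X ω + m) ∈ C → c ≤ m := by
  simp only [acceptanceRisk, le_sInf_iff, Set.mem_ofPred_eq]
  exact ⟨fun h m hm => h m ⟨m, rfl, hm⟩, by rintro h _ ⟨m, rfl, hm⟩; exact h m hm⟩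

lemma exists_add_const_mem_of_acceptanceRisk_lt {c : EReal} (h : acceptanceRisk C X < c) :
    ∃ m : ℝ, (m : EReal) < c ∧ (fun ω => X ω + m) ∈ C := by
  obtain ⟨_, ⟨m, rfl, hm⟩, hlt⟩ := sInf_lt_iff.1 h
  exact ⟨m, hlt, hm⟩

lemma acceptanceRisk_eq_top_iff :
    acceptanceRisk C X = ⊤ ↔ ∀ m : ℝ, (fun ω => X ω + m) ∉ C := by
  rw [← top_le_iff, le_acceptanceRisk_iff]
  simp only [top_le_iff, EReal.coe_ne_top, imp_false]

lemma acceptanceRisk_add_const (m : ℝ) :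
    acceptanceRisk C (fun ω => X ω + m) = acceptanceRisk C X - m := by
  refine eq_of_forall_le_iff fun c => ?_
  have hshift (k : ℝ) : c + m ≤ k ↔ c ≤ ((k - m : ℝ) : EReal) := by
    rw [EReal.coe_sub, EReal.le_sub_iff_add_le (.inl (EReal.coe_ne_bot m))
      (.inl (EReal.coe_ne_top m))]
  rw [EReal.le_sub_iff_add_le (.inl (EReal.coe_ne_bot m)) (.inl (EReal.coe_ne_top m)),
    le_acceptanceRisk_iff, le_acceptanceRisk_iff]
  constructor
  · refine fun h n hn => (hshift n).2 (h (n - m) ?_)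
    convert hn using 2; ring
  · refine fun h n hn => ?_
    have hn' : (fun ω => X ω + (m + n)) ∈ C := by simpa only [add_assoc] using hn
    simpa only [add_sub_cancel_left] using (hshift (m + n)).1 (h _ hn')

lemma acceptanceRisk_smul (hC : ∀ l : ℝ, 0 ≤ l → ∀ X ∈ C, l • X ∈ C) {l : ℝ} (hl : 0 < l) :
    acceptanceRisk C (l • X) = l * acceptanceRisk C X := by
  have hmem (n : ℝ) : (fun ω => (l • X) ω + l * n) ∈ C ↔ (fun ω => X ω + n) ∈ C := by
    have hsmul : (fun ω => (l • X) ω + l * n) = l • fun ω => X ω + n := by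
      ext ω; simp only [Pi.smul_apply, smul_eq_mul, mul_add]
    rw [hsmul]
    refine ⟨fun h => ?_, hC l hl.le _⟩
    simpa only [smul_smul, inv_mul_cancel₀ hl.ne', one_smul] using hC l⁻¹ (by positivity) _ h
  refine eq_of_forall_le_iff fun c => ?_
  rw [← EReal.div_le_iff_le_mul (EReal.coe_pos.2 hl) (EReal.coe_ne_top l),
    le_acceptanceRisk_iff, le_acceptanceRisk_iff]
  have hscale (k : ℝ) : c / l ≤ k ↔ c ≤ ((l * k : ℝ) : EReal) := by
    rw [EReal.div_le_iff_le_mul (EReal.coe_pos.2 hl) (EReal.coe_ne_top l), EReal.coe_mul]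
  constructor
  · exact fun h n hn => (hscale n).2 (h (l * n) ((hmem n).2 hn))
  · intro h n hn
    have hn' : (fun ω => X ω + n / l) ∈ C := (hmem _).1 (by rwa [mul_div_cancel₀ n hl.ne'])
    simpa only [mul_div_cancel₀ n hl.ne'] using (hscale (n / l)).1 (h _ hn')

lemma acceptanceRisk_add_le (hC : ∀ X ∈ C, ∀ Y ∈ C, X + Y ∈ C)
    (hX : acceptanceRisk C X ≠ ⊥) (hY : acceptanceRisk C Y ≠ ⊥) :
    acceptanceRisk C (X + Y) ≤ acceptanceRisk C X + acceptanceRisk C Y := by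
  refine EReal.le_add_of_forall_gt (.inl hX) (.inr hY) fun a ha b hb => ?_
  obtain ⟨m, hma, hm⟩ := exists_add_const_mem_of_acceptanceRisk_lt ha
  obtain ⟨n, hnb, hn⟩ := exists_add_const_mem_of_acceptanceRisk_lt hb
  calc acceptanceRisk C (X + Y) ≤ ((m + n : ℝ) : EReal) := by
        refine acceptanceRisk_le ?_
        convert hC _ hm _ hn using 1
        ext ω; simp only [Pi.add_apply]; ring
    _ ≤ a + b := by rw [EReal.coe_add]; exact add_le_add hma.le hnb.le

lemma acceptanceRisk_le_acceptanceRisk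
    (h : ∀ m : ℝ, (fun ω => Y ω + m) ∈ C → (fun ω => X ω + m) ∈ C) :
    acceptanceRisk C X ≤ acceptanceRisk C Y :=
  le_acceptanceRisk_iff.2 fun m hm => acceptanceRisk_le (h m hm)

lemma acceptanceRisk_le_coe_iff {m : ℝ}
    (hup : ∀ a b : ℝ, a ≤ b → (fun ω => X ω + a) ∈ C → (fun ω => X ω + b) ∈ C)
    (hclosed : (∀ n : ℝ, m < n → (fun ω => X ω + n) ∈ C) → (fun ω => X ω + m) ∈ C) :
    acceptanceRisk C X ≤ m ↔ (fun ω => X ω + m) ∈ C := by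
  refine ⟨fun h => hclosed fun n hn => ?_, acceptanceRisk_le⟩
  obtain ⟨k, hkn, hk⟩ := exists_add_const_mem_of_acceptanceRisk_lt
    (h.trans_lt (EReal.coe_lt_coe_iff.2 hn))
  exact hup k n (EReal.coe_le_coe_iff.1 hkn.le) hk

end AcceptanceSet

section OrliczAcceptanceSet

variable {Ω : Type*} [MeasurableSpace Ω] {Φ : OrliczFunction} {μ : Measure Ω}
  [IsFiniteMeasure μ] {C : Set (Ω → ℝ)}

lemma memLp_of_add_const_mem (hCsub : ∀ X ∈ C, MemLp Φ μ X) {X : Ω → ℝ} {m : ℝ}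
    (h : (fun ω => X ω + m) ∈ C) : MemLp Φ μ X := by
  simpa using (hCsub _ h).add_const (-m)

lemma add_const_mem_of_le (hCsub : ∀ X ∈ C, MemLp Φ μ X)
    (hmono : ∀ X Y : Ω → ℝ, MemLp Φ μ X → Y ∈ C → (∀ᵐ ω ∂μ, Y ω ≤ X ω) → X ∈ C)
    {X : Ω → ℝ} {a b : ℝ} (hab : a ≤ b) (h : (fun ω => X ω + a) ∈ C) :
    (fun ω => X ω + b) ∈ C :=
  hmono _ _ ((memLp_of_add_const_mem hCsub h).add_const b) h
    (Eventually.of_forall fun ω => add_le_add_right hab (X ω))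

lemma acceptanceRisk_ne_bot (hCsub : ∀ X ∈ C, MemLp Φ μ X)
    (hmono : ∀ X Y : Ω → ℝ, MemLp Φ μ X → Y ∈ C → (∀ᵐ ω ∂μ, Y ω ≤ X ω) → X ∈ C)
    (hshift : ∀ X, MemLp Φ μ X → ∃ k : ℝ, (fun ω => X ω - k) ∉ C) (X : Ω → ℝ) :
    acceptanceRisk C X ≠ ⊥ := by
  by_cases hX : MemLp Φ μ X
  · obtain ⟨k, hk⟩ := hshift X hX
    refine ne_bot_of_le_ne_bot (EReal.coe_ne_bot (-k)) (le_acceptanceRisk_iff.2 fun m hm => ?_)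
    by_contra! hlt
    exact hk (by simpa only [sub_eq_add_neg] using
      add_const_mem_of_le hCsub hmono (EReal.coe_lt_coe_iff.1 hlt).le hm)
  · rw [acceptanceRisk_eq_top_iff.2 fun m hm => hX (memLp_of_add_const_mem hCsub hm)]
    exact top_ne_bot

lemma coherent_acceptanceRisk (hCsub : ∀ X ∈ C, MemLp Φ μ X) (hne : C.Nonempty)
    (hmono : ∀ X Y : Ω → ℝ, MemLp Φ μ X → Y ∈ C → (∀ᵐ ω ∂μ, Y ω ≤ X ω) → X ∈ C)
    (hhom : ∀ l : ℝ, 0 ≤ l → ∀ X ∈ C, l • X ∈ C)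
    (hadd : ∀ X ∈ C, ∀ Y ∈ C, X + Y ∈ C)
    (hshift : ∀ X, MemLp Φ μ X → ∃ k : ℝ, (fun ω => X ω - k) ∉ C) :
    Coherent Φ μ (acceptanceRisk C) := by
  have hbot := acceptanceRisk_ne_bot hCsub hmono hshift
  obtain ⟨X₀, hX₀⟩ := hne
  refine ⟨hbot, ⟨X₀, hCsub _ hX₀, ?_⟩,
    fun X Y _ _ => acceptanceRisk_add_le hadd (hbot X) (hbot Y),
    fun X Y hX _ hYX => acceptanceRisk_le_acceptanceRisk fun m hm => ?_,
    fun _ m _ => acceptanceRisk_add_const m, fun _ _ hl _ => acceptanceRisk_smul hhom hl⟩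
  · exact ne_top_of_le_ne_top (EReal.coe_ne_top 0) (acceptanceRisk_le (by simpa using hX₀))
  · exact hmono _ _ (hX.add_const m) hm (hYX.mono fun ω h => add_le_add_left h m)

lemma OrderClosed.acceptanceRisk_le_coe_iff (hocl : OrderClosed Φ μ C)
    (hCsub : ∀ X ∈ C, MemLp Φ μ X)
    (hmono : ∀ X Y : Ω → ℝ, MemLp Φ μ X → Y ∈ C → (∀ᵐ ω ∂μ, Y ω ≤ X ω) → X ∈ C)
    {X : Ω → ℝ} (hX : MemLp Φ μ X) (m : ℝ) :
    acceptanceRisk C X ≤ m ↔ (fun ω => X ω + m) ∈ C :=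
  Orlicz.acceptanceRisk_le_coe_iff (fun _ _ hab => add_const_mem_of_le hCsub hmono hab)
    (hocl.add_const_mem_of_forall_lt hX)

end OrliczAcceptanceSet

end Orlicz

open Orlicz
/-- From a monotone, positively homogeneous, additive, order closed set `C ⊆ L^Φ`
(nonempty, and such that every `X` escapes `C` after subtracting a large constant),
the functional `ρ(X) = inf{m : X + m·1 ∈ C}` is a coherent risk measure whose sublevel
sets are the translates `C − m·1`; in particular they are order closed and `ρ` has the
Fatou property. -/
theorem riskMeasure_from_acceptance_set {Ω : Type*} [MeasurableSpace Ω]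
    (μ : Measure Ω) [IsProbabilityMeasure μ] (Φ : OrliczFunction)
    (C : Set (Ω → ℝ)) (hCsub : ∀ X ∈ C, MemLp Φ μ X) (hne : C.Nonempty)
    (hmono : ∀ X Y : Ω → ℝ, MemLp Φ μ X → Y ∈ C → (∀ᵐ ω ∂μ, Y ω ≤ X ω) → X ∈ C)
    (hhom : ∀ l : ℝ, 0 ≤ l → ∀ X ∈ C, l • X ∈ C)
    (hadd : ∀ X ∈ C, ∀ Y ∈ C, X + Y ∈ C)
    (hocl : OrderClosed Φ μ C)
    (hshift : ∀ X, MemLp Φ μ X → ∃ k : ℝ, (fun ω => X ω - k) ∉ C) :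
    let ρ : (Ω → ℝ) → EReal :=
      fun X => sInf {v : EReal | ∃ m : ℝ, v = ((m : ℝ) : EReal) ∧
        (fun ω => X ω + m) ∈ C}
    Coherent Φ μ ρ ∧
      (∀ m : ℝ, {X | MemLp Φ μ X ∧ ρ X ≤ ((m : ℝ) : EReal)} =
        {X | MemLp Φ μ X ∧ (fun ω => X ω + m) ∈ C}) ∧
      (∀ m : ℝ, OrderClosed Φ μ {X | MemLp Φ μ X ∧ ρ X ≤ ((m : ℝ) : EReal)}) ∧
      Fatou Φ μ ρ := by
  intro ρ
  have hsublevel (m : ℝ) :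
      {X | MemLp Φ μ X ∧ ρ X ≤ m} = {X | MemLp Φ μ X ∧ (fun ω => X ω + m) ∈ C} :=
    Set.ext fun X => and_congr_right fun hX => hocl.acceptanceRisk_le_coe_iff hCsub hmono hX m
  have hclosed (m : ℝ) : OrderClosed Φ μ {X | MemLp Φ μ X ∧ ρ X ≤ m} :=
    hsublevel m ▸ hocl.setOf_add_const_mem m
  exact ⟨coherent_acceptanceRisk hCsub hne hmono hhom hadd hshift, hsublevel, hclosed,
    fatou_of_orderClosed_sublevel hclosed⟩
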